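/- arXiv:2007.13473 — 3 statements merged into one kernel-verified Lean document; each statement's English description precedes it below -/
import Mathlib

section
/- Let b₀ ∈ ℝ^m and suppose either (i) P(b₀) admits a nondegenerate basic feasible solution, i.e. there is a basis I with x(I, b₀) ≥ 0 and all coordinates of x(I, b₀) indexed by I strictly positive, or (ii) Slater's constraint qualification holds, i.e. P(b₀) contains a strictly positive point x ∈ (0, ∞)^d. Then there exists ε > 0 such that P(b) is non-empty for every b ∈ ℝ^m with ‖b − b₀‖ < ε. -/
open Matrix

noncomputable section

variable {m d : ℕ}

/-- The primal feasible set `P(b) = {x : A x = b, x ≥ 0}`. -/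
def feasSet (A : Matrix (Fin m) (Fin d) ℝ) (b : Fin m → ℝ) : Set (Fin d → ℝ) :=
  {x | A *ᵥ x = b ∧ ∀ i, 0 ≤ x i}

/-- The optimality set `OPT(b)` of the primal program `(P_b)`. -/
def optSet (A : Matrix (Fin m) (Fin d) ℝ) (b : Fin m → ℝ) (c : Fin d → ℝ) :
    Set (Fin d → ℝ) :=
  {x | x ∈ feasSet A b ∧ ∀ y ∈ feasSet A b, c ⬝ᵥ x ≤ c ⬝ᵥ y}

/-- The dual feasible set `{λ : Aᵀ λ ≤ c}`. -/
def dualFeasSet (A : Matrix (Fin m) (Fin d) ℝ) (c : Fin d → ℝ) : Set (Fin m → ℝ) :=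
  {l | ∀ j, (Aᵀ *ᵥ l) j ≤ c j}

/-- The set of optimal solutions of the dual program `(D_b)`. -/
def dualOptSet (A : Matrix (Fin m) (Fin d) ℝ) (b : Fin m → ℝ) (c : Fin d → ℝ) :
    Set (Fin m → ℝ) :=
  {l | l ∈ dualFeasSet A c ∧ ∀ mu ∈ dualFeasSet A c, b ⬝ᵥ mu ≤ b ⬝ᵥ l}

/-- The submatrix `A_I` of the columns indexed by `I`, where the subset
`I ⊆ {1,…,d}` of cardinality `m` is encoded by the strictly monotone
enumeration `e : Fin m → Fin d` of its elements. -/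
def subMat (A : Matrix (Fin m) (Fin d) ℝ) (e : Fin m → Fin d) :
    Matrix (Fin m) (Fin m) ℝ :=
  A.submatrix id e

/-- `e` encodes a basis: a subset of size `m` of the columns (strictly monotone
enumeration) whose corresponding submatrix `A_I` is invertible. -/
def IsBasis (A : Matrix (Fin m) (Fin d) ℝ) (e : Fin m → Fin d) : Prop :=
  StrictMono e ∧ IsUnit (subMat A e).det

/-- The primal basic solution `x(I, v)`: equal to `(A_I)⁻¹ v` on the coordinates
in `I` and `0` elsewhere. -/
def basicSol (A : Matrix (Fin m) (Fin d) ℝ) (e : Fin m → Fin d) (v : Fin m → ℝ) :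
    Fin d → ℝ :=
  fun i => ∑ j, if e j = i then ((subMat A e)⁻¹ *ᵥ v) j else 0

/-- The dual basic solution `λ(I) = (A_I)⁻ᵀ c_I`. -/
def dualSol (A : Matrix (Fin m) (Fin d) ℝ) (c : Fin d → ℝ) (e : Fin m → Fin d) :
    Fin m → ℝ :=
  ((subMat A e)ᵀ)⁻¹ *ᵥ fun j => c (e j)

/-- `I` is a dual feasible basis: `Aᵀ λ(I) ≤ c`. -/
def DualFeasibleBasis (A : Matrix (Fin m) (Fin d) ℝ) (c : Fin d → ℝ)
    (e : Fin m → Fin d) : Prop :=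
  IsBasis A e ∧ ∀ j, (Aᵀ *ᵥ dualSol A c e) j ≤ c j

/-- `I` is a primal feasible basis for `(P_b)`: `x(I,b) ≥ 0`. -/
def PrimalFeasibleBasis (A : Matrix (Fin m) (Fin d) ℝ) (b : Fin m → ℝ)
    (e : Fin m → Fin d) : Prop :=
  IsBasis A e ∧ ∀ i, 0 ≤ basicSol A e b i

lemma mulVec_basicSol (A : Matrix (Fin m) (Fin d) ℝ) (e : Fin m → Fin d)
    (hu : IsUnit (subMat A e).det) (v : Fin m → ℝ) :
    A *ᵥ basicSol A e v = v := by
  funext k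
  set y := (subMat A e)⁻¹ *ᵥ v with hy
  have h1 : (A *ᵥ basicSol A e v) k = ∑ j, subMat A e k j * y j := by
    simp only [mulVec, dotProduct, basicSol, ← hy, Finset.mul_sum]
    rw [Finset.sum_comm]
    refine Finset.sum_congr rfl fun j _ => ?_
    simp only [mul_ite, mul_zero, Finset.sum_ite_eq, Finset.mem_univ, if_true]
    rfl
  have h2 : ∑ j, subMat A e k j * y j = (subMat A e *ᵥ y) k := rfl
  rw [h1, h2, hy, mulVec_mulVec, Matrix.mul_nonsing_inv _ hu, one_mulVec]

lemma basicSol_apply (A : Matrix (Fin m) (Fin d) ℝ) {e : Fin m → Fin d}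
    (he : Function.Injective e) (v : Fin m → ℝ) (j : Fin m) :
    basicSol A e v (e j) = ((subMat A e)⁻¹ *ᵥ v) j := by
  simp only [basicSol]
  rw [Finset.sum_eq_single j] <;> simp_all +contextual [he.eq_iff]

lemma key (A : Matrix (Fin m) (Fin d) ℝ) (b0 : Fin m → ℝ) (x0 : Fin d → ℝ)
    (g : (Fin m → ℝ) → (Fin d → ℝ)) (hg : Continuous g) (hg0 : g 0 = 0)
    (hx0 : A *ᵥ x0 = b0) (hgA : ∀ v, A *ᵥ g v = v) (hx0n : ∀ i, 0 ≤ x0 i)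
    (h2 : ∀ i, (∀ v, g v i = 0) ∨ 0 < x0 i) :
    ∃ ε : ℝ, 0 < ε ∧ ∀ b : Fin m → ℝ, ‖b - b0‖ < ε →
      (feasSet A b).Nonempty := by
  set U : Set (Fin d → ℝ) := {y | ∀ i, 0 < x0 i → 0 < y i} with hU
  have hUopen : IsOpen U := by
    have : U = ⋂ i, {y : Fin d → ℝ | 0 < x0 i → 0 < y i} := by
      ext y; simp [hU, Set.mem_iInter]
    rw [this]
    refine isOpen_iInter_of_finite fun i => ?_
    by_cases hi : 0 < x0 i
    · have : {y : Fin d → ℝ | 0 < x0 i → 0 < y i} = (fun y => y i) ⁻¹' Set.Ioi 0 := by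
        ext y; simp [hi]
      rw [this]
      exact (continuous_apply i).isOpen_preimage _ isOpen_Ioi
    · have : {y : Fin d → ℝ | 0 < x0 i → 0 < y i} = Set.univ := by
        ext y; simp [hi]
      simp [this]
  have hF : Continuous fun v : Fin m → ℝ => x0 + g v := by fun_prop
  have h0U : (0 : Fin m → ℝ) ∈ (fun v => x0 + g v) ⁻¹' U := by
    intro i hi
    simpa [hg0] using hi
  obtain ⟨ε, hε, hball⟩ := Metric.isOpen_iff.1 (hF.isOpen_preimage U hUopen) 0 h0U
  refine ⟨ε, hε, fun b hb => ?_⟩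
  have hmem : (b - b0) ∈ Metric.ball (0 : Fin m → ℝ) ε := by
    simpa [dist_eq_norm] using hb
  have hU' := hball hmem
  refine ⟨x0 + g (b - b0), ?_, fun i => ?_⟩
  · rw [mulVec_add, hx0, hgA]; abel
  · rcases h2 i with h | h
    · simpa [h (b - b0)] using hx0n i
    · exact le_of_lt (hU' i h)

/-- Lemma 5.3: let `b₀ ∈ ℝ^m` and suppose either (i) `P(b₀)` admits a
nondegenerate basic feasible solution (a basis `I` with `x(I,b₀) ≥ 0` and all
coordinates indexed by `I` strictly positive), or (ii) Slater's constraint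
qualification holds (`P(b₀)` contains a strictly positive point). Then `P(b)`
is non-empty for all `b` sufficiently close to `b₀`. -/
theorem stmt14 (hm : 1 ≤ m) (hmd : m ≤ d)
    (A : Matrix (Fin m) (Fin d) ℝ) (hA : A.rank = m)
    (b0 : Fin m → ℝ)
    (h : (∃ e : Fin m → Fin d, IsBasis A e ∧ (∀ i, 0 ≤ basicSol A e b0 i) ∧
            ∀ j : Fin m, 0 < basicSol A e b0 (e j)) ∨
         (∃ x ∈ feasSet A b0, ∀ i, 0 < x i)) :
    ∃ ε : ℝ, 0 < ε ∧ ∀ b : Fin m → ℝ, ‖b - b0‖ < ε →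
      (feasSet A b).Nonempty := by
  rcases h with ⟨e, ⟨hsm, hu⟩, hnn, hpos⟩ | ⟨x, ⟨hxA, hxn⟩, hxpos⟩
  · -- case (i): nondegenerate basic feasible solution
    refine key A b0 (basicSol A e b0) (fun v => basicSol A e v)
      ?_ ?_ (mulVec_basicSol A e hu b0) ?_ hnn ?_
    · have hc : Continuous fun v : Fin m → ℝ => basicSol A e v := by
        unfold basicSol
        refine continuous_pi fun i => continuous_finset_sum _ fun j _ => ?_
        by_cases hij : e j = i
        · simp only [hij, if_true]
          unfold mulVec dotProduct
          fun_prop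
        · simp only [hij, if_false]
          exact continuous_const
      exact hc
    · funext i
      simp [basicSol, Matrix.mulVec_zero]
    · intro v
      rw [mulVec_basicSol A e hu]
    · intro i
      by_cases hi : ∃ j, e j = i
      · obtain ⟨j, rfl⟩ := hi
        exact Or.inr (hpos j)
      · left
        intro v
        unfold basicSol
        refine Finset.sum_eq_zero fun j _ => ?_
        rw [if_neg fun hj => hi ⟨j, hj⟩]
  · -- case (ii): Slater
    have hsurj : Function.Surjective A.mulVecLin := by
      rw [← LinearMap.range_eq_top]
      apply Submodule.eq_top_of_finrank_eq
      rw [← Matrix.rank, hA]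
      simp
    obtain ⟨g, hg⟩ := A.mulVecLin.exists_rightInverse_of_surjective
      (LinearMap.range_eq_top.2 hsurj)
    refine key A b0 x (fun v => g v) g.continuous_of_finiteDimensional
      (by simp) hxA ?_ hxn (fun i => Or.inr (hxpos i))
    intro v
    have := LinearMap.congr_fun hg v
    simpa using this

end
end

section
/- Suppose (A1) the optimality set OPT(b) of (P_b) is non-empty and bounded; G_n = r_n(b_n − b) converges in distribution to a random vector G whose law has a positive Lebesgue density in a neighborhood of the origin of ℝ^m, with r_n → ∞; ℙ(OPT(b_n) ≠ ∅) → 1; and assumption (A3) fails, i.e. there exist two distinct bases I_j ≠ I_k, each both primal feasible and dual feasible, with λ(I_j) = λ(I_k). Then liminf_{n→∞} ℙ(OPT(b_n) contains at least two distinct elements) > 0. -/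
open Matrix

noncomputable section

variable {m d : ℕ}

open MeasureTheory Filter Topology

/-- Convergence in distribution (weak convergence of pushforward laws),
characterized via bounded continuous test functions. -/
def TendstoInDistribution {Ω E : Type*} [MeasurableSpace Ω] (P : Measure Ω)
    [TopologicalSpace E] (X : ℕ → Ω → E) (Y : Ω → E) : Prop :=
  ∀ f : BoundedContinuousFunction E ℝ,
    Tendsto (fun n => ∫ ω, f (X n ω) ∂P) atTop (𝓝 (∫ ω, f (Y ω) ∂P))


-- ## Auxiliary lemmas

section Aux

variable {m d : ℕ}

/-- The embedding of a coefficient vector on basis columns into `ℝ^d`. -/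
def auxEmbed (e : Fin m → Fin d) (u : Fin m → ℝ) : Fin d → ℝ :=
  fun i => ∑ j, if e j = i then u j else 0

lemma auxEmbed_mulVec (A : Matrix (Fin m) (Fin d) ℝ) (e : Fin m → Fin d) (u : Fin m → ℝ) :
    A *ᵥ auxEmbed e u = subMat A e *ᵥ u := by
  funext i
  simp only [mulVec, dotProduct, auxEmbed, Finset.mul_sum, subMat, submatrix_apply, id]
  rw [Finset.sum_comm]
  refine Finset.sum_congr rfl fun j _ => ?_
  simp [mul_ite, Finset.sum_ite_eq]

lemma auxEmbed_dot (c : Fin d → ℝ) (e : Fin m → Fin d) (u : Fin m → ℝ) :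
    c ⬝ᵥ auxEmbed e u = (fun j => c (e j)) ⬝ᵥ u := by
  simp only [dotProduct, auxEmbed, Finset.mul_sum]
  rw [Finset.sum_comm]
  refine Finset.sum_congr rfl fun j _ => ?_
  simp [mul_ite, Finset.sum_ite_eq]

lemma auxEmbed_apply_mem (e : Fin m → Fin d) (he : Function.Injective e) (u : Fin m → ℝ)
    (j : Fin m) : auxEmbed e u (e j) = u j := by
  rw [auxEmbed, Finset.sum_eq_single j]
  · simp
  · intro k _ hk
    exact if_neg fun h => hk (he h)
  · simp

lemma auxEmbed_apply_not_mem (e : Fin m → Fin d) (u : Fin m → ℝ) {i : Fin d}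
    (hi : ∀ j, e j ≠ i) : auxEmbed e u i = 0 :=
  Finset.sum_eq_zero fun j _ => by simp [hi j]

lemma basicSol_eq (A : Matrix (Fin m) (Fin d) ℝ) (e : Fin m → Fin d) (v : Fin m → ℝ) :
    basicSol A e v = auxEmbed e ((subMat A e)⁻¹ *ᵥ v) := rfl

/-- reduced costs vanish on basic columns of a basis. -/
lemma reduced_cost_basic (A : Matrix (Fin m) (Fin d) ℝ) (c : Fin d → ℝ)
    {e : Fin m → Fin d} (he : IsBasis A e) (j : Fin m) :
    (Aᵀ *ᵥ dualSol A c e) (e j) = c (e j) := by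
  have hdet : IsUnit ((subMat A e)ᵀ).det := by rw [Matrix.det_transpose]; exact he.2
  have h1 : (Aᵀ *ᵥ dualSol A c e) (e j) = ((subMat A e)ᵀ *ᵥ dualSol A c e) j := by
    simp only [mulVec, dotProduct, transpose_apply, subMat, submatrix_apply, id]
  rw [h1, dualSol, mulVec_mulVec, Matrix.mul_nonsing_inv _ hdet, one_mulVec]

/-- weak-duality optimality criterion. -/
lemma opt_of_dual (A : Matrix (Fin m) (Fin d) ℝ) (b' : Fin m → ℝ) (c : Fin d → ℝ)
    {l : Fin m → ℝ} (hl : l ∈ dualFeasSet A c) {x : Fin d → ℝ} (hx : x ∈ feasSet A b')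
    (hval : c ⬝ᵥ x = l ⬝ᵥ b') : x ∈ optSet A b' c := by
  refine ⟨hx, fun y hy => ?_⟩
  rw [hval, ← hy.1]
  have h1 : (Aᵀ *ᵥ l) ⬝ᵥ y = l ⬝ᵥ (A *ᵥ y) := by
    rw [Matrix.mulVec_transpose, ← Matrix.dotProduct_mulVec]
  rw [← h1]
  exact Finset.sum_le_sum fun i _ => mul_le_mul_of_nonneg_right (hl i) (hy.2 i)

/-- value of a basic solution is `λ ⬝ b'`. -/
lemma basic_value (A : Matrix (Fin m) (Fin d) ℝ) (c : Fin d → ℝ)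
    {e : Fin m → Fin d} (he : IsBasis A e) (b' : Fin m → ℝ) :
    c ⬝ᵥ basicSol A e b' = dualSol A c e ⬝ᵥ b' := by
  rw [basicSol_eq, auxEmbed_dot, dualSol, ← Matrix.transpose_nonsing_inv,
    Matrix.mulVec_transpose, ← Matrix.dotProduct_mulVec]

/-- the key construction: two distinct optimal solutions. -/
lemma two_opt (A : Matrix (Fin m) (Fin d) ℝ) (c : Fin d → ℝ)
    {e f : Fin m → Fin d} (he : IsBasis A e)
    (hdfe : DualFeasibleBasis A c e) (hf : IsBasis A f)
    (hdual : dualSol A c e = dualSol A c f)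
    {i0 : Fin d} {j0 : Fin m} (hj0 : f j0 = i0) (hi0e : ∀ j, e j ≠ i0)
    (b' : Fin m → ℝ) (hpos : ∀ j, 0 < ((subMat A e)⁻¹ *ᵥ b') j) (hm : 1 ≤ m) :
    ∃ x ∈ optSet A b' c, ∃ y ∈ optSet A b' c, x ≠ y := by
  have hne : Nonempty (Fin m) := Fin.pos_iff_nonempty.mp hm
  set B := subMat A e with hB
  have hdet : IsUnit B.det := he.2
  set β : Fin m → ℝ := B⁻¹ *ᵥ b' with hβ
  set x1 : Fin d → ℝ := basicSol A e b' with hx1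
  have heinj : Function.Injective e := he.1.injective
  have hx1A : A *ᵥ x1 = b' := by
    rw [hx1, basicSol_eq, auxEmbed_mulVec, mulVec_mulVec, Matrix.mul_nonsing_inv _ hdet,
      one_mulVec]
  have hx1nn : ∀ i, 0 ≤ x1 i := by
    intro i
    by_cases hi : ∃ j, e j = i
    · obtain ⟨j, rfl⟩ := hi
      rw [hx1, basicSol_eq, auxEmbed_apply_mem e heinj]
      exact (hpos j).le
    · push_neg at hi
      rw [hx1, basicSol_eq, auxEmbed_apply_not_mem e _ hi]
  have hx1feas : x1 ∈ feasSet A b' := ⟨hx1A, hx1nn⟩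
  have hx1opt : x1 ∈ optSet A b' c :=
    opt_of_dual A b' c hdfe.2 hx1feas (basic_value A c he b')
  set acol : Fin m → ℝ := fun k => A k i0 with hacol
  set γ : Fin m → ℝ := B⁻¹ *ᵥ acol with hγ
  set w : Fin d → ℝ := fun i => (if i = i0 then (1:ℝ) else 0) - auxEmbed e γ i with hw
  have hAw : A *ᵥ w = 0 := by
    have h1 : A *ᵥ (fun i => if i = i0 then (1:ℝ) else 0) = acol := by
      funext k
      simp [mulVec, dotProduct, mul_ite, Finset.sum_ite_eq', hacol]
    have h2 : (fun i => (if i = i0 then (1:ℝ) else 0) - auxEmbed e γ i)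
        = (fun i => if i = i0 then (1:ℝ) else 0) - auxEmbed e γ := rfl
    rw [hw, h2, Matrix.mulVec_sub, h1, auxEmbed_mulVec, ← hB, hγ, mulVec_mulVec,
      Matrix.mul_nonsing_inv _ hdet, one_mulVec, sub_self]
  have hcw : c ⬝ᵥ w = 0 := by
    have h1 : c ⬝ᵥ (fun i => if i = i0 then (1:ℝ) else 0) = c i0 := by
      simp [dotProduct, mul_ite, Finset.sum_ite_eq']
    have h2 : c ⬝ᵥ auxEmbed e γ = c i0 := by
      rw [auxEmbed_dot, hγ, ← hj0]
      have h3 : (fun j => c (e j)) ⬝ᵥ (B⁻¹ *ᵥ acol) = dualSol A c e ⬝ᵥ acol := by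
        rw [dualSol, ← hB, ← Matrix.transpose_nonsing_inv,
          Matrix.mulVec_transpose, ← Matrix.dotProduct_mulVec]
      have h4 : dualSol A c e ⬝ᵥ acol = (Aᵀ *ᵥ dualSol A c e) i0 := by
        simp [mulVec, dotProduct, hacol, mul_comm]
      rw [h3, h4, ← hj0, hdual, reduced_cost_basic A c hf j0]
    have h2' : c ⬝ᵥ w = c ⬝ᵥ (fun i => if i = i0 then (1:ℝ) else 0) - c ⬝ᵥ auxEmbed e γ := by
      rw [hw]
      show c ⬝ᵥ ((fun i => if i = i0 then (1:ℝ) else 0) - auxEmbed e γ) = _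
      rw [dotProduct_sub]
    rw [h2', h1, h2, sub_self]
  set t : ℝ := Finset.univ.inf' (Finset.univ_nonempty) (fun j => β j / (|γ j| + 1)) with ht
  have htpos : 0 < t := by
    rw [ht, Finset.lt_inf'_iff]
    intro j _
    exact div_pos (hpos j) (by positivity)
  have htle : ∀ j, t * γ j ≤ β j := by
    intro j
    have h1 : t ≤ β j / (|γ j| + 1) := Finset.inf'_le _ (Finset.mem_univ j)
    have h2 : t * (|γ j| + 1) ≤ β j := by
      rw [← le_div_iff₀ (by positivity)]
      exact h1
    nlinarith [le_abs_self (γ j), abs_nonneg (γ j), htpos.le]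
  set x2 : Fin d → ℝ := x1 + t • w with hx2
  have hx2A : A *ᵥ x2 = b' := by
    rw [hx2, Matrix.mulVec_add, Matrix.mulVec_smul, hAw, smul_zero, add_zero, hx1A]
  have hx1i0 : x1 i0 = 0 := by
    rw [hx1, basicSol_eq, auxEmbed_apply_not_mem e _ hi0e]
  have hx2nn : ∀ i, 0 ≤ x2 i := by
    intro i
    have : x2 i = x1 i + t * w i := rfl
    rw [this]
    by_cases hii : i = i0
    · subst hii
      rw [hx1i0, hw]
      simp only [if_pos rfl]
      rw [auxEmbed_apply_not_mem e _ hi0e]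
      simpa using htpos.le
    · by_cases hie : ∃ j, e j = i
      · obtain ⟨j, rfl⟩ := hie
        have hwval : w (e j) = -γ j := by
          rw [hw]
          simp only [if_neg hii]
          rw [auxEmbed_apply_mem e heinj]
          ring
        have hx1val : x1 (e j) = β j := by
          rw [hx1, basicSol_eq, auxEmbed_apply_mem e heinj, hβ]
        rw [hwval, hx1val]
        have := htle j
        linarith
      · push_neg at hie
        have hwval : w i = 0 := by
          rw [hw]
          simp only [if_neg hii]
          rw [auxEmbed_apply_not_mem e _ hie]
          ring
        have hx1val : x1 i = 0 := by
          rw [hx1, basicSol_eq, auxEmbed_apply_not_mem e _ hie]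
        rw [hwval, hx1val]
        simp
  have hx2val : c ⬝ᵥ x2 = c ⬝ᵥ x1 := by
    rw [hx2, dotProduct_add, dotProduct_smul, hcw, smul_zero, add_zero]
  have hx2opt : x2 ∈ optSet A b' c := by
    refine opt_of_dual A b' c hdfe.2 ⟨hx2A, hx2nn⟩ ?_
    rw [hx2val]
    exact basic_value A c he b'
  refine ⟨x1, hx1opt, x2, hx2opt, ?_⟩
  intro hcon
  have heq : x1 i0 = x2 i0 := by rw [hcon]
  rw [hx1i0] at heq
  have hx2i0 : x2 i0 = t := by
    have h : x2 i0 = x1 i0 + t * w i0 := rfl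
    rw [h, hx1i0, hw]
    simp only [if_pos rfl]
    rw [auxEmbed_apply_not_mem e _ hi0e]
    simp
  rw [hx2i0] at heq
  exact htpos.ne heq

lemma exists_not_mem_range {e f : Fin m → Fin d} (he : StrictMono e)
    (hf : StrictMono f) (hnef : e ≠ f) : ∃ j0, ∀ j, e j ≠ f j0 := by
  by_contra hcon
  push_neg at hcon
  have hsub : Set.range f ⊆ Set.range e := by
    rintro x ⟨j0, rfl⟩
    obtain ⟨j, hj⟩ := hcon j0
    exact ⟨j, hj⟩
  have hcard : (Set.range e).ncard ≤ (Set.range f).ncard := by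
    rw [← Set.image_univ, ← Set.image_univ (f := f),
      Set.ncard_image_of_injective _ he.injective,
      Set.ncard_image_of_injective _ hf.injective]
  have hrange : Set.range f = Set.range e :=
    Set.eq_of_subset_of_ncard_le hsub hcard (Set.finite_range e)
  haveI : WellFoundedLT (Fin m) := inferInstance
  exact hnef (Set.range_injOn_strictMono he hf hrange.symm)

end Aux

/-- Lemma 5.5: assume (A1) `OPT(b)` is non-empty and bounded, `G_n = r_n (b_n − b)`
converges in distribution to `G` whose law has positive Lebesgue density in a
neighborhood of the origin, `ℙ(OPT(b_n) ≠ ∅) → 1`, and (A3) fails: two distinct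
bases, each both primal and dual feasible, induce the same dual basic solution.
Then `liminf ℙ(x*(b_n) is non-unique) > 0`, i.e. with asymptotically positive
probability `OPT(b_n)` contains at least two distinct elements. -/
theorem stmt16 {Ω : Type*} [MeasurableSpace Ω] (P : Measure Ω) [IsProbabilityMeasure P]
    (hm : 1 ≤ m) (hmd : m ≤ d)
    (A : Matrix (Fin m) (Fin d) ℝ) (hA : A.rank = m)
    (b : Fin m → ℝ) (c : Fin d → ℝ)
    (hne : (optSet A b c).Nonempty) (hbd : Bornology.IsBounded (optSet A b c))
    (bn : ℕ → Ω → Fin m → ℝ) (hbn : ∀ n, Measurable (bn n))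
    (rn : ℕ → ℝ) (hrnpos : ∀ n, 0 < rn n) (hrn : Tendsto rn atTop atTop)
    (G : Ω → Fin m → ℝ) (hG : Measurable G)
    (hclt : TendstoInDistribution P (fun n ω => rn n • (bn n ω - b)) G)
    -- the law of `G` has positive density in a neighborhood of the origin
    (hdens : ∃ U : Set (Fin m → ℝ), U ∈ 𝓝 (0 : Fin m → ℝ) ∧
      ∀ s : Set (Fin m → ℝ), MeasurableSet s → s ⊆ U → 0 < volume s →
        0 < Measure.map G P s)
    (hfeas : Tendsto (fun n => P {ω | (optSet A (bn n ω) c).Nonempty}) atTop (𝓝 1))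
    -- failure of (A3)
    (hA3fail : ∃ e f : Fin m → Fin d,
      (PrimalFeasibleBasis A b e ∧ DualFeasibleBasis A c e) ∧
      (PrimalFeasibleBasis A b f ∧ DualFeasibleBasis A c f) ∧
      e ≠ f ∧ dualSol A c e = dualSol A c f) :
    0 < Filter.liminf (fun n =>
      P {ω | ∃ x ∈ optSet A (bn n ω) c, ∃ y ∈ optSet A (bn n ω) c, x ≠ y})
      atTop := by
  classical
  obtain ⟨e, f, ⟨hpe, hde⟩, ⟨hpf, hdf⟩, hef, hdualeq⟩ := hA3fail
  obtain ⟨j0, hj0⟩ := exists_not_mem_range hpe.1.1 hpf.1.1 hef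
  have hdet : IsUnit (subMat A e).det := hpe.1.2
  set B := subMat A e with hB
  set X : ℕ → Ω → Fin m → ℝ := fun n ω => rn n • (bn n ω - b) with hX
  have hXmeas : ∀ n, Measurable (X n) := by
    intro n
    apply measurable_pi_lambda
    intro i
    exact (((measurable_pi_apply i).comp (hbn n)).sub_const (b i)).const_mul (rn n)
  set C : Set (Fin m → ℝ) := {g | ∀ j, 0 < (B⁻¹ *ᵥ g) j} with hC
  have hcont : ∀ j, Continuous fun g : Fin m → ℝ => (B⁻¹ *ᵥ g) j := by
    intro j
    simp only [mulVec, dotProduct]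
    exact continuous_finset_sum _ fun k _ => continuous_const.mul (continuous_apply k)
  have hCopen : IsOpen C := by
    have hCeq : C = ⋂ j, {g : Fin m → ℝ | 0 < (B⁻¹ *ᵥ g) j} := by
      ext g; simp [hC, Set.mem_iInter]
    rw [hCeq]
    exact isOpen_iInter_of_finite fun j => isOpen_lt continuous_const (hcont j)
  -- Event inclusion
  have hincl : ∀ n, X n ⁻¹' C ⊆
      {ω | ∃ x ∈ optSet A (bn n ω) c, ∃ y ∈ optSet A (bn n ω) c, x ≠ y} := by
    intro n ω hω
    have h0 : ∀ j, 0 ≤ (B⁻¹ *ᵥ b) j := by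
      intro j
      have := hpe.2 (e j)
      rwa [basicSol_eq, auxEmbed_apply_mem e hpe.1.1.injective] at this
    have h1 : B⁻¹ *ᵥ (bn n ω) = B⁻¹ *ᵥ b + (rn n)⁻¹ • (B⁻¹ *ᵥ X n ω) := by
      simp only [hX]
      rw [Matrix.mulVec_smul, smul_smul, inv_mul_cancel₀ (hrnpos n).ne', one_smul,
        Matrix.mulVec_sub]
      abel
    have hpos : ∀ j, 0 < (B⁻¹ *ᵥ (bn n ω)) j := by
      intro j
      rw [h1]
      have h2 : 0 < (B⁻¹ *ᵥ X n ω) j := hω j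
      have h3 : (B⁻¹ *ᵥ b + (rn n)⁻¹ • (B⁻¹ *ᵥ X n ω)) j
          = (B⁻¹ *ᵥ b) j + (rn n)⁻¹ * (B⁻¹ *ᵥ X n ω) j := rfl
      rw [h3]
      exact add_pos_of_nonneg_of_pos (h0 j) (mul_pos (inv_pos.mpr (hrnpos n)) h2)
    exact two_opt A c hpe.1 hde hpf.1 hdualeq rfl (fun j => hj0 j) (bn n ω) hpos hm
  -- Weak convergence of the pushforward laws
  set μlim : ProbabilityMeasure (Fin m → ℝ) :=
    ⟨P.map G, Measure.isProbabilityMeasure_map hG.aemeasurable⟩ with hμlim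
  set μs : ℕ → ProbabilityMeasure (Fin m → ℝ) :=
    fun n => ⟨P.map (X n), Measure.isProbabilityMeasure_map (hXmeas n).aemeasurable⟩ with hμs
  have htend : Tendsto μs atTop (𝓝 μlim) := by
    rw [MeasureTheory.ProbabilityMeasure.tendsto_iff_forall_integral_tendsto]
    intro fbc
    have h1 : ∀ n, ∫ x, fbc x ∂(μs n : Measure (Fin m → ℝ)) = ∫ ω, fbc (X n ω) ∂P :=
      fun n => integral_map (hXmeas n).aemeasurable fbc.continuous.aestronglyMeasurable
    have h2 : ∫ x, fbc x ∂(μlim : Measure (Fin m → ℝ)) = ∫ ω, fbc (G ω) ∂P :=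
      integral_map hG.aemeasurable fbc.continuous.aestronglyMeasurable
    rw [h2]
    simp only [h1]
    exact hclt fbc
  have key : (μlim : Measure (Fin m → ℝ)) C ≤
      Filter.liminf (fun n => (μs n : Measure (Fin m → ℝ)) C) atTop :=
    MeasureTheory.ProbabilityMeasure.le_liminf_measure_open_of_tendsto htend hCopen
  -- Positivity of the limit measure of C
  obtain ⟨U, hU, hUpos⟩ := hdens
  obtain ⟨δ, hδpos, hball⟩ := Metric.mem_nhds_iff.mp hU
  set g0 : Fin m → ℝ := B *ᵥ (fun _ => (1:ℝ)) with hg0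
  have hg0C : ∀ ε : ℝ, 0 < ε → ε • g0 ∈ C := by
    intro ε hε
    show ∀ j, 0 < (B⁻¹ *ᵥ (ε • g0)) j
    intro j
    have hinv : B⁻¹ *ᵥ (ε • g0) = ε • ((B⁻¹ * B) *ᵥ fun _ => (1:ℝ)) := by
      rw [hg0, Matrix.mulVec_smul, mulVec_mulVec]
    rw [hinv, Matrix.nonsing_inv_mul _ hdet, one_mulVec]
    simpa using hε
  set ε : ℝ := δ / (2 * (‖g0‖ + 1)) with hε
  have hεpos : 0 < ε := by
    rw [hε]
    exact div_pos hδpos (by positivity)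
  have hεball : ε • g0 ∈ Metric.ball (0 : Fin m → ℝ) δ := by
    rw [mem_ball_zero_iff, norm_smul, Real.norm_of_nonneg hεpos.le, hε,
      div_mul_eq_mul_div, div_lt_iff₀ (by positivity)]
    nlinarith [norm_nonneg g0, hδpos]
  set s : Set (Fin m → ℝ) := C ∩ Metric.ball 0 δ with hs
  have hsopen : IsOpen s := hCopen.inter Metric.isOpen_ball
  have hsmem : ε • g0 ∈ s := ⟨hg0C ε hεpos, hεball⟩
  have hsU : s ⊆ U := (Set.inter_subset_right).trans hball
  have hvol : 0 < volume s := hsopen.measure_pos volume ⟨_, hsmem⟩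
  have hmappos : 0 < Measure.map G P s := hUpos s hsopen.measurableSet hsU hvol
  have hμC : 0 < (μlim : Measure (Fin m → ℝ)) C := by
    refine lt_of_lt_of_le ?_ (measure_mono (Set.inter_subset_left (t := Metric.ball 0 δ)))
    exact hmappos
  -- Conclusion
  have happ : ∀ n, (μs n : Measure (Fin m → ℝ)) C = P (X n ⁻¹' C) := fun n =>
    Measure.map_apply (hXmeas n) hCopen.measurableSet
  have hle : Filter.liminf (fun n => (μs n : Measure (Fin m → ℝ)) C) atTop ≤
      Filter.liminf (fun n =>
        P {ω | ∃ x ∈ optSet A (bn n ω) c, ∃ y ∈ optSet A (bn n ω) c, x ≠ y}) atTop := by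
    exact Filter.liminf_le_liminf (Filter.Eventually.of_forall fun n =>
      le_trans (happ n).le (measure_mono (hincl n)))
  exact lt_of_lt_of_le (lt_of_lt_of_le hμC key) hle


end
end

section
/- (Strict complementary slackness.) Suppose both the primal linear program (P_b) and its dual (D_b) have optimal solutions. Then there exist an optimal solution x* of (P_b) and an optimal solution λ* of (D_b) such that for every index j ∈ {1,…,d}, either x*_j > 0 or (Aᵀλ*)_j < c_j. -/
open Matrix

noncomputable section

variable {m d : ℕ}

/-!
Goldman–Tucker: for a skew-symmetric matrix `K` there is `z ≥ 0` with `K z ≥ 0` and `z + K z > 0`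
(Tucker's theorem, a consequence of Farkas' lemma applied once per coordinate and summed). Applied
to the self-dual homogeneous embedding of the primal–dual pair, it yields `(x, λ, τ)` with
`A x = τ b`, `Aᵀλ ≤ τ c`, `cᵀx ≤ bᵀλ`, strict complementarity between `x` and `τ c - Aᵀλ`, and
`τ + bᵀλ - cᵀx > 0`. If `τ = 0`, then `x` is a recession direction of the primal and `λ` one of the
dual, so optimality of the given solutions forces `cᵀx ≥ 0 ≥ bᵀλ`, a contradiction. Hence `τ > 0`,
and `(x / τ, λ / τ)` is a feasible pair with no duality gap, strictly complementary.

Farkas' lemma is the separation theorem for closed cones; a finitely generated cone is closed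
because, by the conic Carathéodory theorem, it is a finite union of images of the orthant under
injective linear maps.
-/

open Function

section Caratheodory

variable {𝕜 E ι : Type*} [Field 𝕜] [LinearOrder 𝕜] [IsStrictOrderedRing 𝕜]
  [AddCommGroup E] [Module 𝕜 E] [Fintype ι]

theorem exists_nonneg_sub_smul_support_ssubset {t a : ι → 𝕜} (ht : 0 ≤ t)
    (ha : support a ⊆ support t) (hpos : ∃ i, 0 < a i) :
    ∃ θ : 𝕜, 0 ≤ t - θ • a ∧ support (t - θ • a) ⊂ support t := by
  classical
  obtain ⟨i₀, hi₀, hmin⟩ := (Finset.univ.filter fun i => 0 < a i).exists_min_image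
    (fun i => t i / a i) (by simpa [Finset.Nonempty] using hpos)
  simp only [Finset.mem_filter, Finset.mem_univ, true_and] at hi₀ hmin
  have hθ : 0 ≤ t i₀ / a i₀ := div_nonneg (ht i₀) hi₀.le
  refine ⟨t i₀ / a i₀, fun i => ?_, ?_⟩
  · simp only [Pi.zero_apply, Pi.sub_apply, Pi.smul_apply, smul_eq_mul, sub_nonneg]
    rcases lt_or_ge 0 (a i) with h | h
    · exact (le_div_iff₀ h).mp (hmin i h)
    · exact (mul_nonpos_of_nonneg_of_nonpos hθ h).trans (ht i)
  · refine (Set.ssubset_iff_of_subset fun i hi => ?_).mpr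
      ⟨i₀, ha hi₀.ne', by simp [hi₀.ne']⟩
    by_contra hti
    have hai : a i = 0 := notMem_support.mp fun h => hti (ha h)
    simp_all

theorem exists_nonneg_map_eq_injOn_support (L : (ι → 𝕜) →ₗ[𝕜] E) {t : ι → 𝕜} (ht : 0 ≤ t) :
    ∃ s, 0 ≤ s ∧ L s = L t ∧ ∀ a, support a ⊆ support s → L a = 0 → a = 0 := by
  obtain ⟨s, ⟨hs, hLs⟩, hmin⟩ :=
    (InvImage.wf (fun s : ι → 𝕜 => support s) wellFounded_lt).has_min
      {s | 0 ≤ s ∧ L s = L t} ⟨t, ht, rfl⟩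
  refine ⟨s, hs, hLs, ?_⟩
  have key : ∀ a, support a ⊆ support s → L a = 0 → ¬ ∃ i, 0 < a i := by
    intro a ha hLa hpos
    obtain ⟨θ, hθ, hsub⟩ := exists_nonneg_sub_smul_support_ssubset hs ha hpos
    exact hmin _ ⟨hθ, by rw [map_sub, map_smul, hLa, smul_zero, sub_zero, hLs]⟩ hsub
  intro a ha hLa
  by_contra hne
  obtain ⟨i, hi⟩ := Function.ne_iff.mp hne
  rcases hi.lt_or_gt with hneg | hpos
  · exact key (-a) (by rwa [support_neg]) (by rw [map_neg, hLa, neg_zero])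
      ⟨i, by simpa using hneg⟩
  · exact key a ha hLa ⟨i, hpos⟩

end Caratheodory

section Farkas

variable {ι E : Type*} [Fintype ι] [AddCommGroup E] [Module ℝ E] [TopologicalSpace E]
  [IsTopologicalAddGroup E] [ContinuousSMul ℝ E] [T2Space E]

theorem isClosed_image_nonneg_inter_support_subset (L : (ι → ℝ) →ₗ[ℝ] E) (S : Set ι)
    (hS : ∀ a, support a ⊆ S → L a = 0 → a = 0) :
    IsClosed (L '' (Set.Ici 0 ∩ {x | support x ⊆ S})) := by
  let W : Submodule ℝ (ι → ℝ) := Submodule.pi Sᶜ fun _ => ⊥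
  have hW : ∀ x, x ∈ W ↔ support x ⊆ S := fun x => by
    rw [support_subset_iff']; simp [W]
  have hemb : Topology.IsClosedEmbedding (L ∘ₗ W.subtype) :=
    LinearMap.isClosedEmbedding_of_injective <| LinearMap.ker_eq_bot'.mpr fun x hx =>
      Subtype.ext (hS x ((hW x).mp x.2) hx)
  have himage : L '' (Set.Ici 0 ∩ {x | support x ⊆ S}) =
      (L ∘ₗ W.subtype) '' (W.subtype ⁻¹' Set.Ici 0) := by
    ext y
    constructor
    · rintro ⟨x, ⟨hx, hxS⟩, rfl⟩
      exact ⟨⟨x, (hW x).mpr hxS⟩, hx, rfl⟩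
    · rintro ⟨x, hx, rfl⟩
      exact ⟨x, ⟨hx, (hW x).mp x.2⟩, rfl⟩
  rw [himage]
  exact hemb.isClosedMap _ (isClosed_Ici.preimage continuous_subtype_val)

theorem isClosed_image_nonneg (L : (ι → ℝ) →ₗ[ℝ] E) : IsClosed (L '' Set.Ici 0) := by
  have hunion : L '' Set.Ici 0 = ⋃ (S : Set ι) (_ : ∀ a, support a ⊆ S → L a = 0 → a = 0),
      L '' (Set.Ici 0 ∩ {x | support x ⊆ S}) := by
    ext y
    simp only [Set.mem_iUnion]
    constructor
    · rintro ⟨t, ht, rfl⟩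
      obtain ⟨s, hs, hLs, hinj⟩ := exists_nonneg_map_eq_injOn_support L ht
      exact ⟨support s, hinj, s, ⟨hs, Set.Subset.rfl⟩, hLs⟩
    · rintro ⟨S, -, x, ⟨hx, -⟩, rfl⟩
      exact ⟨x, hx, rfl⟩
  rw [hunion]
  exact isClosed_iUnion_of_finite fun S => isClosed_iUnion_of_finite fun hS =>
    isClosed_image_nonneg_inter_support_subset L S hS

theorem Matrix.farkas {n : Type*} [Fintype n] (M : Matrix n ι ℝ) (u : n → ℝ) :
    (∃ x, 0 ≤ x ∧ M *ᵥ x = u) ∨ ∃ y, 0 ≤ Mᵀ *ᵥ y ∧ u ⬝ᵥ y < 0 := by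
  classical
  refine or_iff_not_imp_left.mpr fun h => ?_
  let C : ProperCone ℝ (n → ℝ) :=
    ⟨(PointedCone.positive ℝ (ι → ℝ)).map M.mulVecLin, isClosed_image_nonneg M.mulVecLin⟩
  obtain ⟨f, hfC, hfu⟩ :=
    C.hyperplane_separation_point (x₀ := u) fun ⟨x, hx, hxu⟩ => h ⟨x, hx, hxu⟩
  set y := (dotProductEquiv ℝ n).symm (f : (n → ℝ) →ₗ[ℝ] ℝ)
  have hf : ∀ w, f w = y ⬝ᵥ w := fun w => by
    rw [← dotProductEquiv_apply_apply, LinearEquiv.apply_symm_apply]; rfl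
  refine ⟨y, fun i => ?_, by rwa [hf, dotProduct_comm] at hfu⟩
  have := hfC (M *ᵥ Pi.single i 1) ⟨Pi.single i 1, by simp, rfl⟩
  rw [hf, mulVec_single_one, dotProduct_comm] at this
  exact this

end Farkas

section Tucker

variable {n : Type*} [Fintype n]

theorem Matrix.exists_nonneg_mulVec_nonneg_add_apply_pos (K : Matrix n n ℝ) (hK : Kᵀ = -K)
    (i : n) : ∃ z, 0 ≤ z ∧ 0 ≤ K *ᵥ z ∧ 0 < z i + (K *ᵥ z) i := by
  classical
  -- Farkas for the cone spanned by the columns of `-K` and the unit vectors, at the point `-eᵢ`.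
  rcases (fromCols (-K) (1 : Matrix n n ℝ)).farkas (-Pi.single i 1) with
    ⟨x, hx, hKx⟩ | ⟨y, hy, hyi⟩
  · have hKz : K *ᵥ (x ∘ Sum.inl) = x ∘ Sum.inr + Pi.single i 1 := by
      rw [fromCols_mulVec, neg_mulVec, one_mulVec] at hKx
      rw [← neg_neg (Pi.single i 1), ← hKx]
      abel
    refine ⟨x ∘ Sum.inl, fun j => hx _, ?_, ?_⟩
    · rw [hKz]
      exact add_nonneg (fun j => hx _) (Pi.single_nonneg.mpr zero_le_one)
    · rw [hKz]
      have : 0 ≤ x (.inl i) := hx _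
      have : 0 ≤ x (.inr i) := hx _
      simp only [Pi.add_apply, Function.comp_apply, Pi.single_eq_same]
      linarith
  · rw [transpose_fromCols, fromRows_mulVec, transpose_neg, hK, neg_neg, transpose_one,
      one_mulVec] at hy
    refine ⟨y, fun j => hy (.inr j), fun j => hy (.inl j), ?_⟩
    simpa using add_pos_of_pos_of_nonneg (by simpa using hyi) (hy (.inl i))

theorem Matrix.exists_nonneg_mulVec_nonneg_add_pos (K : Matrix n n ℝ) (hK : Kᵀ = -K) :
    ∃ z, 0 ≤ z ∧ 0 ≤ K *ᵥ z ∧ ∀ i, 0 < z i + (K *ᵥ z) i := by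
  choose z hz hKz hpos using K.exists_nonneg_mulVec_nonneg_add_apply_pos hK
  refine ⟨∑ i, z i, Finset.sum_nonneg fun i _ => hz i, ?_, fun i => ?_⟩
  · rw [mulVec_sum]
    exact Finset.sum_nonneg fun i _ => hKz i
  · rw [mulVec_sum, Finset.sum_apply, Finset.sum_apply, ← Finset.sum_add_distrib]
    exact Finset.sum_pos' (fun j _ => add_nonneg (hz j i) (hKz j i))
      ⟨i, Finset.mem_univ i, hpos i⟩

end Tucker

section SelfDual

variable {ι κ : Type*}

/-- In block form, acting on `(p, q, x, τ)` where the dual variable is `λ = p - q`: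
`[[0, 0, A, -b], [0, 0, -A, b], [-Aᵀ, Aᵀ, 0, c], [bᵀ, -bᵀ, -cᵀ, 0]]`. -/
def selfDualMatrix (A : Matrix ι κ ℝ) (b : ι → ℝ) (c : κ → ℝ) :
    Matrix (ι ⊕ ι ⊕ κ ⊕ Unit) (ι ⊕ ι ⊕ κ ⊕ Unit) ℝ :=
  Matrix.of fun
    | .inl i, .inr (.inr (.inl j)) => A i j
    | .inl i, .inr (.inr (.inr _)) => -b i
    | .inr (.inl i), .inr (.inr (.inl j)) => -A i j
    | .inr (.inl i), .inr (.inr (.inr _)) => b i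
    | .inr (.inr (.inl j)), .inl i => -A i j
    | .inr (.inr (.inl j)), .inr (.inl i) => A i j
    | .inr (.inr (.inl j)), .inr (.inr (.inr _)) => c j
    | .inr (.inr (.inr _)), .inl i => b i
    | .inr (.inr (.inr _)), .inr (.inl i) => -b i
    | .inr (.inr (.inr _)), .inr (.inr (.inl j)) => -c j
    | _, _ => 0

theorem selfDualMatrix_transpose (A : Matrix ι κ ℝ) (b : ι → ℝ) (c : κ → ℝ) :
    (selfDualMatrix A b c)ᵀ = -selfDualMatrix A b c := by
  ext (i | i | j | _) (i' | i' | j' | _) <;> simp [selfDualMatrix]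

theorem selfDualMatrix_mulVec [Fintype ι] [Fintype κ] (A : Matrix ι κ ℝ) (b : ι → ℝ)
    (c : κ → ℝ) (p q : ι → ℝ) (x : κ → ℝ) (τ : ℝ) :
    selfDualMatrix A b c *ᵥ Sum.elim p (Sum.elim q (Sum.elim x fun _ => τ)) =
      Sum.elim (A *ᵥ x - τ • b) (Sum.elim (τ • b - A *ᵥ x)
        (Sum.elim (τ • c - Aᵀ *ᵥ (p - q)) fun _ => b ⬝ᵥ (p - q) - c ⬝ᵥ x)) := by
  ext (i | i | j | _) <;>
    simp [selfDualMatrix, mulVec, dotProduct, Fintype.sum_sum_type, mul_sub,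
      Finset.sum_sub_distrib] <;> ring

theorem exists_homogeneous_strictly_complementary [Fintype ι] [Fintype κ] (A : Matrix ι κ ℝ)
    (b : ι → ℝ) (c : κ → ℝ) :
    ∃ (x : κ → ℝ) (l : ι → ℝ) (τ : ℝ), 0 ≤ x ∧ 0 ≤ τ ∧ A *ᵥ x = τ • b ∧
      Aᵀ *ᵥ l ≤ τ • c ∧ c ⬝ᵥ x ≤ b ⬝ᵥ l ∧ c ⬝ᵥ x < b ⬝ᵥ l + τ ∧
      ∀ j, (Aᵀ *ᵥ l) j < τ * c j + x j := by
  obtain ⟨z, hz, hKz, hpos⟩ := (selfDualMatrix A b c).exists_nonneg_mulVec_nonneg_add_pos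
    (selfDualMatrix_transpose A b c)
  set p : ι → ℝ := fun i => z (.inl i)
  set q : ι → ℝ := fun i => z (.inr (.inl i))
  set x : κ → ℝ := fun j => z (.inr (.inr (.inl j)))
  set τ := z (.inr (.inr (.inr ())))
  have hz_eq : z = Sum.elim p (Sum.elim q (Sum.elim x fun _ => τ)) := by
    ext (i | i | j | _) <;> rfl
  rw [hz_eq, selfDualMatrix_mulVec] at hKz hpos
  refine ⟨x, p - q, τ, fun j => hz _, hz _, funext fun i => ?_, fun j => ?_, ?_, ?_,
    fun j => ?_⟩
  · have h₁ := hKz (.inl i)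
    have h₂ := hKz (.inr (.inl i))
    simp only [Pi.zero_apply, Sum.elim_inl, Sum.elim_inr, Pi.sub_apply, sub_nonneg] at h₁ h₂
    exact le_antisymm h₂ h₁
  · simpa using hKz (.inr (.inr (.inl j)))
  · simpa using hKz (.inr (.inr (.inr ())))
  · have := hpos (.inr (.inr (.inr ())))
    simp only [Sum.elim_inr] at this
    linarith
  · have := hpos (.inr (.inr (.inl j)))
    simp only [Sum.elim_inr, Sum.elim_inl, Pi.sub_apply, Pi.smul_apply, smul_eq_mul] at this
    linarith

end SelfDual

section LinearProgram

variable {A : Matrix (Fin m) (Fin d) ℝ} {b : Fin m → ℝ} {c : Fin d → ℝ}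

theorem dotProduct_le_of_mem_feasSet_of_mem_dualFeasSet {x : Fin d → ℝ} {l : Fin m → ℝ}
    (hx : x ∈ feasSet A b) (hl : l ∈ dualFeasSet A c) : b ⬝ᵥ l ≤ c ⬝ᵥ x := by
  rw [← hx.1, dotProduct_comm, dotProduct_mulVec, ← mulVec_transpose]
  exact dotProduct_le_dotProduct_of_nonneg_right hl hx.2

theorem mem_optSet_and_mem_dualOptSet_of_dotProduct_le {x : Fin d → ℝ} {l : Fin m → ℝ}
    (hx : x ∈ feasSet A b) (hl : l ∈ dualFeasSet A c) (h : c ⬝ᵥ x ≤ b ⬝ᵥ l) :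
    x ∈ optSet A b c ∧ l ∈ dualOptSet A b c :=
  ⟨⟨hx, fun _ hy => h.trans (dotProduct_le_of_mem_feasSet_of_mem_dualFeasSet hy hl)⟩,
    ⟨hl, fun _ hμ => (dotProduct_le_of_mem_feasSet_of_mem_dualFeasSet hx hμ).trans h⟩⟩

theorem dotProduct_nonneg_of_mem_optSet {x₀ x : Fin d → ℝ} (hx₀ : x₀ ∈ optSet A b c)
    (hx : 0 ≤ x) (hAx : A *ᵥ x = 0) : 0 ≤ c ⬝ᵥ x := by
  have hfeas : x₀ + x ∈ feasSet A b :=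
    ⟨by rw [mulVec_add, hAx, add_zero, hx₀.1.1], add_nonneg hx₀.1.2 hx⟩
  have := hx₀.2 _ hfeas
  rw [dotProduct_add] at this
  linarith

theorem dotProduct_nonpos_of_mem_dualOptSet {l₀ l : Fin m → ℝ} (hl₀ : l₀ ∈ dualOptSet A b c)
    (hl : Aᵀ *ᵥ l ≤ 0) : b ⬝ᵥ l ≤ 0 := by
  have hfeas : l₀ + l ∈ dualFeasSet A c := fun j => by
    simpa [mulVec_add] using add_le_add (hl₀.1 j) (hl j)
  have := hl₀.2 _ hfeas
  rw [dotProduct_add] at this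
  linarith

theorem exists_strictly_complementary_of_homogeneous {x : Fin d → ℝ} {l : Fin m → ℝ} {τ : ℝ}
    (hτ : 0 < τ) (hx : 0 ≤ x) (hAx : A *ᵥ x = τ • b) (hAl : Aᵀ *ᵥ l ≤ τ • c)
    (hgap : c ⬝ᵥ x ≤ b ⬝ᵥ l) (hstrict : ∀ j, (Aᵀ *ᵥ l) j < τ * c j + x j) :
    ∃ xstar ∈ optSet A b c, ∃ lstar ∈ dualOptSet A b c,
      ∀ j : Fin d, 0 < xstar j ∨ (Aᵀ *ᵥ lstar) j < c j := by
  have hfeas : τ⁻¹ • x ∈ feasSet A b :=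
    ⟨by rw [mulVec_smul, hAx, smul_smul, inv_mul_cancel₀ hτ.ne', one_smul],
      smul_nonneg (inv_nonneg.mpr hτ.le) hx⟩
  have hdual_feas : τ⁻¹ • l ∈ dualFeasSet A c := fun j => by
    rw [mulVec_smul, Pi.smul_apply, smul_eq_mul, inv_mul_le_iff₀ hτ]
    exact hAl j
  obtain ⟨hopt, hdual_opt⟩ := mem_optSet_and_mem_dualOptSet_of_dotProduct_le hfeas hdual_feas
    (by simpa only [dotProduct_smul] using smul_le_smul_of_nonneg_left hgap (inv_nonneg.mpr hτ.le))
  refine ⟨_, hopt, _, hdual_opt, fun j => ?_⟩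
  rcases (hx j).lt_or_eq with hxj | hxj
  · exact .inl (smul_pos (inv_pos.mpr hτ) hxj)
  · refine .inr ?_
    rw [mulVec_smul, Pi.smul_apply, smul_eq_mul, inv_mul_lt_iff₀ hτ]
    simpa [← hxj] using hstrict j

end LinearProgram

theorem stmt17_general (A : Matrix (Fin m) (Fin d) ℝ)
    (b : Fin m → ℝ) (c : Fin d → ℝ)
    (hP : (optSet A b c).Nonempty) (hD : (dualOptSet A b c).Nonempty) :
    ∃ xstar ∈ optSet A b c, ∃ lstar ∈ dualOptSet A b c,
      ∀ j : Fin d, 0 < xstar j ∨ (Aᵀ *ᵥ lstar) j < c j := by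
  obtain ⟨x₀, hx₀⟩ := hP
  obtain ⟨l₀, hl₀⟩ := hD
  obtain ⟨x, l, τ, hx, hτ, hAx, hAl, hgap, hgap_strict, hstrict⟩ :=
    exists_homogeneous_strictly_complementary A b c
  refine exists_strictly_complementary_of_homogeneous (hτ.lt_of_ne' fun hτ₀ => ?_)
    hx hAx hAl hgap hstrict
  subst hτ₀
  rw [zero_smul] at hAx hAl
  have := dotProduct_nonneg_of_mem_optSet hx₀ hx hAx
  have := dotProduct_nonpos_of_mem_dualOptSet hl₀ hAl
  linarith

/-- Lemma A.1 (strict complementary slackness): if both the primal `(P_b)` and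
the dual `(D_b)` have optimal solutions, then there exist a primal optimal
solution `x*` and a dual optimal solution `λ*` such that for every index `j`,
either `x*_j > 0` or `(Aᵀλ*)_j < c_j`. -/
theorem stmt17 (hm : 1 ≤ m) (hmd : m ≤ d)
    (A : Matrix (Fin m) (Fin d) ℝ) (hA : A.rank = m)
    (b : Fin m → ℝ) (c : Fin d → ℝ)
    (hP : (optSet A b c).Nonempty) (hD : (dualOptSet A b c).Nonempty) :
    ∃ xstar ∈ optSet A b c, ∃ lstar ∈ dualOptSet A b c,
      ∀ j : Fin d, 0 < xstar j ∨ (Aᵀ *ᵥ lstar) j < c j :=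
  stmt17_general A b c hP hD

end
end
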